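/- Let n ≥ 3 and 1 ≤ h ≤ n. Then Q_n is not h-edge tolerable (n − h + 1)-diagnosable under the PMC model: there exist an edge set F_e with |F_e| = h and distinct vertex sets F₁, F₂ with |F₁| = n − h, |F₂| = n − h + 1 such that no edge of Q_n − F_e joins V − (F₁ ∪ F₂) to F₁ Δ F₂. -/

import Mathlib

/-- The n-dimensional hypercube: vertices are `Fin n → Bool`,
adjacent iff Hamming distance exactly 1. -/
def Qn (n : ℕ) : SimpleGraph (Fin n → Bool) where
  Adj u v := hammingDist u v = 1
  symm := ⟨by intro u v h; show hammingDist v u = 1; rw [hammingDist_comm]; exact h⟩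
  loopless := ⟨by intro u h; simp [hammingDist_self] at h⟩

instance (n : ℕ) : DecidableRel (Qn n).Adj :=
  fun u v => inferInstanceAs (Decidable (hammingDist u v = 1))

/-!
Delete the edges from a vertex `u` to `h` of its neighbours, let `F₁` be the remaining
neighbours of `u` and `F₂ = F₁ ∪ {u}`. Then `F₁ Δ F₂ = {u}`, and every neighbour of `u` that
survives the deletion lies in `F₁`, so no fault-free vertex outside `F₁ ∪ F₂` can tell `F₁`
from `F₂`. In `Q_n` every vertex has exactly `n` neighbours, giving `|F₁| = n - h`.
-/

namespace SimpleGraph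

variable {V : Type*} (G : SimpleGraph V)

/-- Distinguishability of two fault sets under the PMC model. -/
def Distinguishes (F₁ F₂ : Set V) : Prop :=
  ∃ x, x ∉ F₁ ∪ F₂ ∧ ∃ y ∈ symmDiff F₁ F₂, G.Adj x y

variable {G} {u : V} {S : Set V}

lemma image_mk_subset_edgeSet (hS : S ⊆ G.neighborSet u) :
    (fun v => s(u, v)) '' S ⊆ G.edgeSet := by
  rintro _ ⟨v, hv, rfl⟩
  exact hS hv

variable (G u S)

lemma neighborSet_deleteEdges_image_mk :
    (G.deleteEdges ((fun v => s(u, v)) '' S)).neighborSet u = G.neighborSet u \ S := by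
  ext v
  have hmem : s(u, v) ∈ (fun v => s(u, v)) '' S ↔ v ∈ S :=
    (Sym2.mkEmbedding u).injective.mem_set_image
  simp only [mem_neighborSet, deleteEdges_adj, Set.mem_sdiff, hmem]

lemma not_distinguishes_deleteEdges_image_mk :
    ¬ (G.deleteEdges ((fun v => s(u, v)) '' S)).Distinguishes
      (G.neighborSet u \ S) (insert u (G.neighborSet u \ S)) := by
  rintro ⟨x, hx, y, hy, hxy⟩
  rw [symmDiff_of_le (Set.subset_insert u _)] at hy
  obtain rfl : y = u := by simpa using hy
  have hx' : x ∈ G.neighborSet y \ S := by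
    rw [← neighborSet_deleteEdges_image_mk]
    exact hxy.symm
  exact hx (Or.inl hx')

end SimpleGraph

namespace Qn

variable {n : ℕ}

def flipBit (x : Fin n → Bool) (i : Fin n) : Fin n → Bool :=
  Function.update x i (!x i)

lemma flipBit_injective (x : Fin n → Bool) : Function.Injective (flipBit x) := by
  intro i j hij
  by_contra hne
  have := congrFun hij i
  simp [flipBit, hne] at this

lemma adj_iff_exists_eq_flipBit {x y : Fin n → Bool} :
    (Qn n).Adj x y ↔ ∃ i, y = flipBit x i := by
  change hammingDist x y = 1 ↔ _
  rw [hammingDist, Finset.card_eq_one]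
  simp_rw [Finset.ext_iff, Finset.mem_filter, Finset.mem_univ, true_and, Finset.mem_singleton]
  refine exists_congr fun i => ⟨fun hi => funext fun j => ?_, fun hy j => ?_⟩
  · by_cases hji : j = i
    · subst hji
      simpa [flipBit, Bool.eq_not_iff, eq_comm] using hi j
    · simpa [flipBit, hji, eq_comm] using hi j
  · by_cases hji : j = i
    · subst hji
      simp [hy, flipBit]
    · simp [hy, flipBit, hji]

lemma neighborSet_eq_range_flipBit (x : Fin n → Bool) :
    (Qn n).neighborSet x = Set.range (flipBit x) := by
  ext y
  simp [adj_iff_exists_eq_flipBit, eq_comm]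

lemma ncard_neighborSet (x : Fin n → Bool) : ((Qn n).neighborSet x).ncard = n := by
  rw [neighborSet_eq_range_flipBit, Set.ncard_range_of_injective (flipBit_injective x),
    Nat.card_fin]

end Qn

theorem Qn_not_diagnosable_upper_general (n h : ℕ) (hhn : h ≤ n) :
    ∃ (Fe : Set (Sym2 (Fin n → Bool))) (F₁ F₂ : Set (Fin n → Bool)),
      Fe ⊆ (Qn n).edgeSet ∧ Fe.ncard = h ∧ F₁ ≠ F₂ ∧
      F₁.ncard = n - h ∧ F₂.ncard = n - h + 1 ∧
      ¬ ∃ x, x ∉ F₁ ∪ F₂ ∧ ∃ y ∈ symmDiff F₁ F₂,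
        ((Qn n).deleteEdges Fe).Adj x y := by
  let u : Fin n → Bool := fun _ => false
  obtain ⟨S, hSN, hS⟩ := Set.exists_subset_card_eq (s := (Qn n).neighborSet u) (n := h)
    (by rwa [Qn.ncard_neighborSet])
  have hu : u ∉ (Qn n).neighborSet u \ S := fun hu => (Qn n).notMem_neighborSet_self hu.1
  have hF₁ : ((Qn n).neighborSet u \ S).ncard = n - h := by
    rw [Set.ncard_sdiff hSN, Qn.ncard_neighborSet, hS]
  refine ⟨_, _, _, SimpleGraph.image_mk_subset_edgeSet hSN,
    (Set.ncard_image_of_injective S (Sym2.mkEmbedding u).injective).trans hS,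
    (Set.ssubset_insert hu).ne, hF₁, by rw [Set.ncard_insert_of_notMem hu, hF₁],
    SimpleGraph.not_distinguishes_deleteEdges_image_mk (Qn n) u S⟩

theorem Qn_not_diagnosable_upper (n h : ℕ) (hn : 3 ≤ n) (hh1 : 1 ≤ h)
    (hhn : h ≤ n) :
    ∃ (Fe : Set (Sym2 (Fin n → Bool))) (F₁ F₂ : Set (Fin n → Bool)),
      Fe ⊆ (Qn n).edgeSet ∧ Fe.ncard = h ∧ F₁ ≠ F₂ ∧
      F₁.ncard = n - h ∧ F₂.ncard = n - h + 1 ∧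
      ¬ ∃ x, x ∉ F₁ ∪ F₂ ∧ ∃ y ∈ symmDiff F₁ F₂,
        ((Qn n).deleteEdges Fe).Adj x y :=
  Qn_not_diagnosable_upper_general n h hhn
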